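/- arXiv:1805.03041 — 2 statements merged into one kernel-verified Lean document; each statement's English description precedes it below -/
import Mathlib

section
/- Let (E,κ) and (B,λ) be connected digital images. If a (κ,λ)-continuous surjection p : (E,κ) → (B,λ) has the unique path lifting property and has no conciliator point, then p is a digital (κ,λ)-covering map. (Theorem 3.6) -/
open Set

/-- 2-adjacency on `ℤ` (the `l₁`-adjacency on `ℤ`): `x` and `y` are distinct with `|x - y| = 1`. -/
def adj2 (x y : ℤ) : Prop := |x - y| = 1

/-- 8-adjacency on `ℤ²` (the `l₂`-adjacency on `ℤ²`). -/
def adj8 (p q : ℤ × ℤ) : Prop := p ≠ q ∧ |p.1 - q.1| ≤ 1 ∧ |p.2 - q.2| ≤ 1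

/-- 26-adjacency on `ℤ³` (the `l₃`-adjacency on `ℤ³`). -/
def adj26 (p q : ℤ × ℤ × ℤ) : Prop :=
  p ≠ q ∧ |p.1 - q.1| ≤ 1 ∧ |p.2.1 - q.2.1| ≤ 1 ∧ |p.2.2 - q.2.2| ≤ 1

/-- An adjacency relation (as any `l_u`-adjacency is) is symmetric and irreflexive. -/
def IsAdjacency {A : Type*} (κ : A → A → Prop) : Prop := Symmetric κ ∧ Irreflexive κ

/-- `f` is `(κ,λ)`-continuous on `X`: κ-adjacent points are mapped to equal or λ-adjacent
points. -/
def DigContOn {A B : Type*} (f : A → B) (X : Set A)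
    (κ : A → A → Prop) (lam : B → B → Prop) : Prop :=
  ∀ x₀ ∈ X, ∀ x₁ ∈ X, κ x₀ x₁ → f x₀ = f x₁ ∨ lam (f x₀) (f x₁)

/-- `f : [0,m]_ℤ → X` is a digital `κ`-path of length `m` in `X`,
i.e. a `(2,κ)`-continuous map on `[0,m]_ℤ` with values in `X`. -/
def IsDigPath {A : Type*} (X : Set A) (κ : A → A → Prop) (m : ℕ) (f : ℤ → A) : Prop :=
  (∀ i ∈ Icc (0 : ℤ) (m : ℤ), f i ∈ X) ∧
  ∀ i ∈ Icc (0 : ℤ) (m : ℤ), ∀ j ∈ Icc (0 : ℤ) (m : ℤ),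
    adj2 i j → f i = f j ∨ κ (f i) (f j)

/-- There is a digital `κ`-path of length `m` in `X` from `x` to `y`. -/
def ReachIn {A : Type*} (X : Set A) (κ : A → A → Prop) (x y : A) (m : ℕ) : Prop :=
  ∃ f : ℤ → A, IsDigPath X κ m f ∧ f 0 = x ∧ f (m : ℤ) = y

/-- `X` is `κ`-connected: every two of its points are joined by a `κ`-path in `X`. -/
def DigConnected {A : Type*} (X : Set A) (κ : A → A → Prop) : Prop :=
  ∀ x ∈ X, ∀ y ∈ X, ∃ m : ℕ, ReachIn X κ x y m

/-- The `κ`-neighborhood `N_κ(e₀, ε)` of `e₀` in `X` with radius `ε`: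
points of `X` whose shortest `κ`-path distance from `e₀` is at most `ε`, together with `e₀`. -/
def Nbhd {A : Type*} (X : Set A) (κ : A → A → Prop) (e₀ : A) (ε : ℕ) : Set A :=
  {e ∈ X | ∃ m : ℕ, m ≤ ε ∧ ReachIn X κ e₀ e m} ∪ {e₀}

/-- The restriction of `f` to `X` is a `(κ,λ)`-isomorphism onto `Y`: a `(κ,λ)`-continuous
bijection of `X` onto `Y` whose inverse is `(λ,κ)`-continuous. -/
def IsDigIsoOn {A B : Type*} (f : A → B) (X : Set A) (Y : Set B)
    (κ : A → A → Prop) (lam : B → B → Prop) : Prop :=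
  MapsTo f X Y ∧ InjOn f X ∧ SurjOn f X Y ∧ DigContOn f X κ lam ∧
  ∀ x₀ ∈ X, ∀ x₁ ∈ X, lam (f x₀) (f x₁) → x₀ = x₁ ∨ κ x₀ x₁

/-- `p` is a radius-`n` digital `(κ,λ)`-covering map of `E` onto `Bs`
(`n = 1` gives the usual digital `(κ,λ)`-covering map): a `(κ,λ)`-continuous surjection
such that for each `b ∈ Bs` there is a set `F` of points of the fiber over `b` whose radius-`n`
neighborhoods are pairwise disjoint, partition `p⁻¹(N_λ(b,n))`, and are each mapped
isomorphically onto `N_λ(b,n)` by `p`. -/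
def IsRadiusCovering {A B : Type*} (p : A → B) (E : Set A) (Bs : Set B)
    (κ : A → A → Prop) (lam : B → B → Prop) (n : ℕ) : Prop :=
  MapsTo p E Bs ∧ SurjOn p E Bs ∧ DigContOn p E κ lam ∧
  ∀ b ∈ Bs, ∃ F : Set A, F ⊆ {e ∈ E | p e = b} ∧
    (E ∩ p ⁻¹' (Nbhd Bs lam b n) = ⋃ e ∈ F, Nbhd E κ e n) ∧
    F.Pairwise (fun e e' => Disjoint (Nbhd E κ e n) (Nbhd E κ e' n)) ∧
    ∀ e ∈ F, IsDigIsoOn p (Nbhd E κ e n) (Nbhd Bs lam b n) κ lam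

/-- `p` is a radius-`n` local `(κ,λ)`-isomorphism (`n = 1` gives the usual local
`(κ,λ)`-isomorphism): for every `e ∈ E` the restriction of `p` to `N_κ(e,n)` is a
`(κ,λ)`-isomorphism onto `N_λ(p e, n)`. -/
def IsLocalIso {A B : Type*} (p : A → B) (E : Set A) (Bs : Set B)
    (κ : A → A → Prop) (lam : B → B → Prop) (n : ℕ) : Prop :=
  ∀ e ∈ E, IsDigIsoOn p (Nbhd E κ e n) (Nbhd Bs lam (p e) n) κ lam

/-- `p` has the digital path lifting property: every `λ`-path `a` in `Bs` and every point
`e ∈ E` of the fiber over `a 0` admit a lifting of `a` beginning at `e`. -/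
def PathLiftingProp {A B : Type*} (p : A → B) (E : Set A) (Bs : Set B)
    (κ : A → A → Prop) (lam : B → B → Prop) : Prop :=
  ∀ (m : ℕ) (a : ℤ → B), IsDigPath Bs lam m a → ∀ e ∈ E, p e = a 0 →
    ∃ g : ℤ → A, IsDigPath E κ m g ∧ (∀ i ∈ Icc (0 : ℤ) (m : ℤ), p (g i) = a i) ∧ g 0 = e

/-- `p` has the uniqueness of digital path lifts property: two `κ`-paths in `E` with the
same projection and the same starting point coincide (on their domain `[0,m]_ℤ`). -/
def UniqLiftsProp {A B : Type*} (p : A → B) (E : Set A) (κ : A → A → Prop) : Prop :=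
  ∀ (m : ℕ) (a b : ℤ → A), IsDigPath E κ m a → IsDigPath E κ m b →
    (∀ i ∈ Icc (0 : ℤ) (m : ℤ), p (a i) = p (b i)) → a 0 = b 0 →
    EqOn a b (Icc (0 : ℤ) (m : ℤ))

/-- `p` has the unique path lifting property (u.p.l.): both the path lifting property and
the uniqueness of path lifts property. -/
def UPL {A B : Type*} (p : A → B) (E : Set A) (Bs : Set B)
    (κ : A → A → Prop) (lam : B → B → Prop) : Prop :=
  PathLiftingProp p E Bs κ lam ∧ UniqLiftsProp p E κ

/-- `e` is a conciliator point for `p`: there are `e', e'' ∈ N_κ(e,1)` which are not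
`κ`-adjacent but whose images are `λ`-adjacent. -/
def IsConciliator {A B : Type*} (p : A → B) (E : Set A)
    (κ : A → A → Prop) (lam : B → B → Prop) (e : A) : Prop :=
  ∃ e' ∈ Nbhd E κ e 1, ∃ e'' ∈ Nbhd E κ e 1, ¬ κ e' e'' ∧ lam (p e') (p e'')

/-- `f : [0,m]_ℤ → X` is a simple `κ`-loop of length `m` in `X`: a closed `κ`-path such that
`f 0, …, f (m-1)` are pairwise distinct and `f i`, `f j` are `κ`-adjacent iff
`j = i ± 1 (mod m)`. -/
def IsSimpleLoop {A : Type*} (X : Set A) (κ : A → A → Prop) (m : ℕ) (f : ℤ → A) : Prop :=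
  IsDigPath X κ m f ∧ f 0 = f (m : ℤ) ∧
  (∀ i ∈ Ico (0 : ℤ) (m : ℤ), ∀ j ∈ Ico (0 : ℤ) (m : ℤ), f i = f j → i = j) ∧
  ∀ i ∈ Ico (0 : ℤ) (m : ℤ), ∀ j ∈ Ico (0 : ℤ) (m : ℤ),
    (κ (f i) (f j) ↔ (j % (m : ℤ) = (i + 1) % (m : ℤ) ∨ j % (m : ℤ) = (i - 1) % (m : ℤ)))

/-!
Lifting one-step paths makes `p` map `N_κ(e,1)` onto `N_λ(p e,1)`, uniqueness of those lifts
makes it injective there, and the absence of conciliator points is exactly the continuity of the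
inverse; so `p` is a local isomorphism. For a symmetric adjacency a local isomorphism is a
covering map: two neighborhoods `N_κ(e,1)`, `N_κ(e',1)` over the same `b` that share a point `x`
give two points `e, e' ∈ N_κ(x,1)` with the same image, hence `e = e'`.
-/

def edgePath {A : Type*} (x y : A) : ℤ → A := fun i => if i = 0 then x else y

section NbhdOne

variable {A B : Type*} {X E : Set A} {Bs : Set B} {κ : A → A → Prop} {lam : B → B → Prop}
  {p : A → B}

lemma isDigPath_edgePath (hsym : Symmetric κ) {x y : A} (hx : x ∈ X) (hy : y ∈ X)
    (hxy : x = y ∨ κ x y) : IsDigPath X κ 1 (edgePath x y) := by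
  constructor
  · intro i hi
    obtain rfl | rfl : i = 0 ∨ i = 1 := by simp only [mem_Icc, Nat.cast_one] at hi; omega
    · simpa [edgePath] using hx
    · simpa [edgePath] using hy
  · intro i hi j hj hij
    simp only [adj2, mem_Icc, Nat.cast_one] at hi hj hij
    obtain ⟨rfl, rfl⟩ | ⟨rfl, rfl⟩ : (i = 0 ∧ j = 1) ∨ (i = 1 ∧ j = 0) := by
      rcases abs_eq (zero_le_one' ℤ) |>.mp hij with h | h <;> omega
    · simpa [edgePath] using hxy
    · simpa [edgePath, eq_comm] using hxy.imp_right (@hsym _ _)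

lemma eq_or_adj_of_reachIn_le_one {x y : A} {m : ℕ} (hm : m ≤ 1) (h : ReachIn X κ x y m) :
    x = y ∨ κ x y := by
  obtain ⟨f, ⟨-, hadj⟩, rfl, rfl⟩ := h
  interval_cases m
  · exact Or.inl rfl
  · simpa using hadj 0 (by simp) 1 (by simp) (by simp [adj2])

lemma mem_nbhd_one_iff (hsym : Symmetric κ) {e x : A} (he : e ∈ X) :
    x ∈ Nbhd X κ e 1 ↔ x = e ∨ x ∈ X ∧ κ e x := by
  constructor
  · rintro (⟨hx, m, hm, hreach⟩ | rfl)
    · exact (eq_or_adj_of_reachIn_le_one hm hreach).imp Eq.symm (And.intro hx)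
    · exact Or.inl rfl
  · rintro (rfl | ⟨hx, hex⟩)
    · exact Or.inr rfl
    · exact Or.inl ⟨hx, 1, le_rfl, edgePath e x, isDigPath_edgePath hsym he hx (Or.inr hex),
        by simp [edgePath], by simp [edgePath]⟩

lemma nbhd_one_subset (hsym : Symmetric κ) {e : A} (he : e ∈ X) : Nbhd X κ e 1 ⊆ X := by
  intro x hx
  rcases (mem_nbhd_one_iff hsym he).mp hx with rfl | ⟨hx, -⟩ <;> assumption

lemma mem_nbhd_one_comm (hsym : Symmetric κ) {e x : A} (he : e ∈ X) (hx : x ∈ X) :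
    x ∈ Nbhd X κ e 1 ↔ e ∈ Nbhd X κ x 1 := by
  rw [mem_nbhd_one_iff hsym he, mem_nbhd_one_iff hsym hx]
  exact or_congr eq_comm ⟨fun h => ⟨he, hsym h.2⟩, fun h => ⟨hx, hsym h.2⟩⟩

lemma isDigPath_edgePath_of_mem_nbhd_one (hsym : Symmetric κ) {e x : A} (he : e ∈ X)
    (hx : x ∈ Nbhd X κ e 1) : IsDigPath X κ 1 (edgePath e x) := by
  refine isDigPath_edgePath hsym he (nbhd_one_subset hsym he hx) ?_
  rcases (mem_nbhd_one_iff hsym he).mp hx with rfl | ⟨-, hex⟩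
  exacts [Or.inl rfl, Or.inr hex]

lemma DigContOn.mapsTo_nbhd_one (hcont : DigContOn p E κ lam) (hκsym : Symmetric κ)
    (hlamsym : Symmetric lam) (hmaps : MapsTo p E Bs) {e : A} (he : e ∈ E) :
    MapsTo p (Nbhd E κ e 1) (Nbhd Bs lam (p e) 1) := by
  intro x hx
  rw [mem_nbhd_one_iff hlamsym (hmaps he)]
  rcases (mem_nbhd_one_iff hκsym he).mp hx with rfl | ⟨hx, hex⟩
  · exact Or.inl rfl
  · exact (hcont e he x hx hex).imp Eq.symm (And.intro (hmaps hx))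

lemma UniqLiftsProp.injOn_nbhd_one (hu : UniqLiftsProp p E κ) (hsym : Symmetric κ) {e : A}
    (he : e ∈ E) : InjOn p (Nbhd E κ e 1) := by
  intro x₁ hx₁ x₂ hx₂ hp
  have hlifts := hu 1 _ _ (isDigPath_edgePath_of_mem_nbhd_one hsym he hx₁)
    (isDigPath_edgePath_of_mem_nbhd_one hsym he hx₂)
    (fun i _ => by by_cases hi : i = 0 <;> simp [edgePath, hi, hp]) (by simp [edgePath])
  simpa [edgePath] using hlifts (show (1 : ℤ) ∈ Icc 0 ((1 : ℕ) : ℤ) by simp)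

lemma PathLiftingProp.surjOn_nbhd_one (hl : PathLiftingProp p E Bs κ lam)
    (hsym : Symmetric lam) (hmaps : MapsTo p E Bs) {e : A} (he : e ∈ E) :
    SurjOn p (Nbhd E κ e 1) (Nbhd Bs lam (p e) 1) := by
  intro y hy
  obtain ⟨g, hg, hpg, hg0⟩ :=
    hl 1 _ (isDigPath_edgePath_of_mem_nbhd_one hsym (hmaps he) hy) e he (by simp [edgePath])
  have h1 : (1 : ℤ) ∈ Icc 0 ((1 : ℕ) : ℤ) := by simp
  exact ⟨g 1, Or.inl ⟨hg.1 1 h1, 1, le_rfl, g, hg, hg0, rfl⟩,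
    by simpa [edgePath] using hpg 1 h1⟩

lemma isLocalIso_one_of_upl (hκsym : Symmetric κ) (hlamsym : Symmetric lam)
    (hmaps : MapsTo p E Bs) (hcont : DigContOn p E κ lam) (hupl : UPL p E Bs κ lam)
    (hnc : ∀ e ∈ E, ¬ IsConciliator p E κ lam e) : IsLocalIso p E Bs κ lam 1 := fun e he =>
  ⟨hcont.mapsTo_nbhd_one hκsym hlamsym hmaps he, hupl.2.injOn_nbhd_one hκsym he,
    hupl.1.surjOn_nbhd_one hlamsym hmaps he,
    fun x hx y hy => hcont x (nbhd_one_subset hκsym he hx) y (nbhd_one_subset hκsym he hy),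
    fun x hx y hy hxy => by
      by_contra! h
      exact hnc e he ⟨x, hx, y, hy, h.2, hxy⟩⟩

lemma IsLocalIso.isRadiusCovering_one (hloc : IsLocalIso p E Bs κ lam 1) (hκsym : Symmetric κ)
    (hlamsym : Symmetric lam) (hmaps : MapsTo p E Bs) (hsurj : SurjOn p E Bs)
    (hcont : DigContOn p E κ lam) :
    IsRadiusCovering p E Bs κ lam 1 := by
  refine ⟨hmaps, hsurj, hcont, fun b hb => ⟨{e ∈ E | p e = b}, subset_rfl, ?_, ?_, ?_⟩⟩
  · ext x
    simp only [mem_inter_iff, mem_preimage, mem_iUnion, mem_ofPred_eq, exists_prop]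
    constructor
    · rintro ⟨hx, hpx⟩
      obtain ⟨e, hex, rfl⟩ :=
        (hloc x hx).2.2.1 ((mem_nbhd_one_comm hlamsym hb (hmaps hx)).mp hpx)
      have he := nbhd_one_subset hκsym hx hex
      exact ⟨e, ⟨he, rfl⟩, (mem_nbhd_one_comm hκsym hx he).mp hex⟩
    · rintro ⟨e, ⟨he, rfl⟩, hx⟩
      exact ⟨nbhd_one_subset hκsym he hx, (hloc e he).1 hx⟩
  · rintro e ⟨he, hpe⟩ e' ⟨he', hpe'⟩ hne
    refine disjoint_left.mpr fun x hx hx' => hne ?_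
    have hxE := nbhd_one_subset hκsym he hx
    exact (hloc x hxE).2.1 ((mem_nbhd_one_comm hκsym he hxE).mp hx)
      ((mem_nbhd_one_comm hκsym he' hxE).mp hx') (hpe.trans hpe'.symm)
  · rintro e ⟨he, rfl⟩
    exact hloc e he

end NbhdOne

theorem thm_3_6_general {N M : ℕ} (E : Set (Fin N → ℤ)) (Bs : Set (Fin M → ℤ))
    (κ : (Fin N → ℤ) → (Fin N → ℤ) → Prop) (lam : (Fin M → ℤ) → (Fin M → ℤ) → Prop)
    (hκ : IsAdjacency κ) (hlam : IsAdjacency lam)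
    (p : (Fin N → ℤ) → (Fin M → ℤ))
    (hmaps : Set.MapsTo p E Bs) (hsurj : Set.SurjOn p E Bs)
    (hcont : DigContOn p E κ lam) (hupl : UPL p E Bs κ lam)
    (hnc : ∀ e ∈ E, ¬ IsConciliator p E κ lam e) :
    IsRadiusCovering p E Bs κ lam 1 := by
  obtain ⟨hκsym, -⟩ := hκ
  obtain ⟨hlamsym, -⟩ := hlam
  exact (isLocalIso_one_of_upl hκsym hlamsym hmaps hcont hupl hnc).isRadiusCovering_one
    hκsym hlamsym hmaps hsurj hcont

/-- Theorem 3.6: a `(κ,λ)`-continuous surjection between connected digital images with the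
unique path lifting property and no conciliator point is a digital `(κ,λ)`-covering map. -/
theorem thm_3_6 {N M : ℕ} (E : Set (Fin N → ℤ)) (Bs : Set (Fin M → ℤ))
    (κ : (Fin N → ℤ) → (Fin N → ℤ) → Prop) (lam : (Fin M → ℤ) → (Fin M → ℤ) → Prop)
    (hκ : IsAdjacency κ) (hlam : IsAdjacency lam)
    (hconnE : DigConnected E κ) (hconnB : DigConnected Bs lam)
    (p : (Fin N → ℤ) → (Fin M → ℤ))
    (hmaps : Set.MapsTo p E Bs) (hsurj : Set.SurjOn p E Bs)
    (hcont : DigContOn p E κ lam) (hupl : UPL p E Bs κ lam)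
    (hnc : ∀ e ∈ E, ¬ IsConciliator p E κ lam e) :
    IsRadiusCovering p E Bs κ lam 1 :=
  thm_3_6_general E Bs κ lam hκ hlam p hmaps hsurj hcont hupl hnc
end

section
/- Let p : (E,κ) → (B,λ) be a (κ,λ)-covering map between connected digital images and let n ∈ ℕ. Then p is a radius n covering map if and only if every lifting of every simple λ-loop in B of length at most 2n+1 is a simple κ-loop in E. (Theorem 4.5) -/
open Set

/-!
A radius-`1` covering has unique path lifting. If `p` is a radius-`n` covering, a loop of length
at most `2n+1` stays within distance `n` of its base point, so each of its lifts stays in a single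
sheet, on which `p` is an isomorphism; hence lifts of simple loops are simple.

Conversely, suppose lifts of simple loops of length at most `2n+1` are simple, in particular
closed. A loop of length at most `2n+1` that is not simple either stutters or has a chord, and
cutting it there yields shorter loops; by induction on the length, every lift of every loop of
length at most `2n+1` is closed. Consequently two lifted paths from a common point, of total length
at most `2n+1`, whose projections end at the same point end at the same point themselves. This
makes the radius-`n` neighborhoods of the points of a fiber pairwise disjoint and maps each of them
isomorphically onto the radius-`n` neighborhood of the base point.
-/

section Paths

variable {A B : Type*} {X : Set A} {κ : A → A → Prop}

lemma adj2_iff {i j : ℤ} : adj2 i j ↔ j = i + 1 ∨ i = j + 1 := by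
  rw [adj2, abs_eq zero_le_one]
  omega

lemma IsDigPath.mem {m : ℕ} {f : ℤ → A} (h : IsDigPath X κ m f) {i : ℤ} (h0 : 0 ≤ i)
    (hi : i ≤ m) : f i ∈ X :=
  h.1 i ⟨h0, hi⟩

lemma IsDigPath.step {m : ℕ} {f : ℤ → A} (h : IsDigPath X κ m f) {i : ℤ} (h0 : 0 ≤ i)
    (hi : i < m) : f i = f (i + 1) ∨ κ (f i) (f (i + 1)) :=
  h.2 i ⟨h0, hi.le⟩ (i + 1) ⟨by omega, by omega⟩ (adj2_iff.2 (Or.inl rfl))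

lemma IsDigPath.of_step (hκ : Symmetric κ) {m : ℕ} {f : ℤ → A}
    (hmem : ∀ i : ℤ, 0 ≤ i → i ≤ m → f i ∈ X)
    (hstep : ∀ i : ℤ, 0 ≤ i → i < m → f i = f (i + 1) ∨ κ (f i) (f (i + 1))) :
    IsDigPath X κ m f := by
  refine ⟨fun i hi => hmem i hi.1 hi.2, fun i ⟨h0i, hi⟩ j ⟨h0j, hj⟩ hij => ?_⟩
  rcases adj2_iff.1 hij with rfl | rfl
  · exact hstep i h0i (by omega)
  · exact (hstep j h0j (by omega)).imp Eq.symm (@hκ _ _)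

lemma IsDigPath.mono {m m' : ℕ} {f : ℤ → A} (h : IsDigPath X κ m f) (hm : m' ≤ m) :
    IsDigPath X κ m' f :=
  ⟨fun i ⟨h0, hi⟩ => h.mem h0 (by omega),
    fun i ⟨h0i, hi⟩ j ⟨h0j, hj⟩ => h.2 i ⟨h0i, by omega⟩ j ⟨h0j, by omega⟩⟩

lemma IsDigPath.shift {m m' : ℕ} {f : ℤ → A} (h : IsDigPath X κ m f) {k : ℤ} (hk : 0 ≤ k)
    (hm : k + m' ≤ m) : IsDigPath X κ m' (fun t => f (k + t)) :=
  ⟨fun i ⟨h0, hi⟩ => h.mem (by omega) (by omega), fun i ⟨h0i, hi⟩ j ⟨h0j, hj⟩ hij =>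
    h.2 _ ⟨by omega, by omega⟩ _ ⟨by omega, by omega⟩
      (adj2_iff.2 (by have := adj2_iff.1 hij; omega))⟩

lemma IsDigPath.reverse {m : ℕ} {f : ℤ → A} (h : IsDigPath X κ m f) :
    IsDigPath X κ m (fun t => f (m - t)) :=
  ⟨fun i ⟨h0, hi⟩ => h.mem (by omega) (by omega), fun i ⟨h0i, hi⟩ j ⟨h0j, hj⟩ hij =>
    h.2 _ ⟨by omega, by omega⟩ _ ⟨by omega, by omega⟩
      (adj2_iff.2 (by have := adj2_iff.1 hij; omega))⟩

lemma IsDigPath.map {Y : Set B} {lam : B → B → Prop} {p : A → B} (hmap : MapsTo p X Y)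
    (hcont : DigContOn p X κ lam) {m : ℕ} {f : ℤ → A} (h : IsDigPath X κ m f) :
    IsDigPath Y lam m (p ∘ f) :=
  ⟨fun i hi => hmap (h.1 i hi), fun i hi j hj hij =>
    (h.2 i hi j hj hij).elim (fun he => Or.inl (congrArg p he))
      (hcont _ (h.1 i hi) _ (h.1 j hj))⟩

def pathAppend (k : ℤ) (f g : ℤ → A) : ℤ → A := fun i => if i ≤ k then f i else g (i - k)

lemma pathAppend_of_le {k i : ℤ} {f g : ℤ → A} (h : i ≤ k) : pathAppend k f g i = f i :=
  if_pos h

lemma pathAppend_of_lt {k i : ℤ} {f g : ℤ → A} (h : k < i) : pathAppend k f g i = g (i - k) :=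
  if_neg (not_le.2 h)

lemma pathAppend_add {k t : ℤ} {f g : ℤ → A} (hfg : f k = g 0) (ht : 0 ≤ t) :
    pathAppend k f g (k + t) = g t := by
  rcases ht.eq_or_lt with rfl | ht
  · rw [add_zero, pathAppend_of_le le_rfl, hfg]
  · rw [pathAppend_of_lt (by omega), add_sub_cancel_left]

lemma IsDigPath.append (hκ : Symmetric κ) {m₁ m₂ : ℕ} {f g : ℤ → A} (hf : IsDigPath X κ m₁ f)
    (hg : IsDigPath X κ m₂ g) (hfg : f m₁ = g 0) :
    IsDigPath X κ (m₁ + m₂) (pathAppend m₁ f g) := by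
  refine .of_step hκ (fun i h0 hi => ?_) (fun i h0 hi => ?_)
  · rcases le_or_gt i m₁ with h | h
    · rw [pathAppend_of_le h]; exact hf.mem h0 h
    · rw [pathAppend_of_lt h]; exact hg.mem (by omega) (by push_cast at hi; omega)
  · push_cast at hi
    rcases lt_trichotomy i m₁ with h | rfl | h
    · rw [pathAppend_of_le h.le, pathAppend_of_le (by omega)]; exact hf.step h0 h
    · rw [pathAppend_of_le le_rfl, pathAppend_of_lt (by omega), hfg, add_sub_cancel_left]
      simpa using hg.step le_rfl (by omega)
    · rw [pathAppend_of_lt h, pathAppend_of_lt (by omega), show i + 1 - m₁ = i - m₁ + 1 by ring]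
      exact hg.step (by omega) (by omega)

lemma lift_pathAppend {p : A → B} {k m : ℕ} {f g : ℤ → A} {a b : ℤ → B}
    (hf : ∀ i ∈ Icc (0 : ℤ) k, p (f i) = a i) (hg : ∀ i ∈ Icc (0 : ℤ) m, p (g i) = b i) :
    ∀ i ∈ Icc (0 : ℤ) (k + m : ℕ), p (pathAppend k f g i) = pathAppend k a b i := by
  rintro i ⟨h0, hi⟩
  rcases le_or_gt i k with h | h
  · rw [pathAppend_of_le h, pathAppend_of_le h]; exact hf i ⟨h0, h⟩
  · rw [pathAppend_of_lt h, pathAppend_of_lt h]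
    exact hg _ ⟨by omega, by push_cast at hi; omega⟩

def stepPath (x y : A) : ℤ → A := fun i => if i ≤ 0 then x else y

lemma stepPath_zero (x y : A) : stepPath x y 0 = x := if_pos le_rfl

lemma stepPath_one (x y : A) : stepPath x y 1 = y := if_neg (by norm_num)

lemma pathAppend_stepPath (k : ℤ) (f : ℤ → A) (x : A) :
    pathAppend k f (stepPath (f k) x) (k + 1) = x := by
  rw [pathAppend_add (stepPath_zero _ _).symm zero_le_one, stepPath_one]

lemma apply_stepPath (p : A → B) (x y : A) (t : ℤ) :
    p (stepPath x y t) = stepPath (p x) (p y) t := by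
  unfold stepPath; split_ifs <;> rfl

lemma isDigPath_stepPath {x y : A} (hκ : Symmetric κ) (hx : x ∈ X) (hy : y ∈ X)
    (hxy : x = y ∨ κ x y) : IsDigPath X κ 1 (stepPath x y) := by
  refine .of_step hκ (fun i _ _ => ?_) (fun i h0 hi => ?_)
  · unfold stepPath; split_ifs <;> assumption
  · obtain rfl : i = 0 := by omega
    simpa [stepPath_zero, stepPath_one] using hxy

def pathShortcut (i j : ℤ) (f : ℤ → A) : ℤ → A :=
  pathAppend (i + 1) (pathAppend i f (stepPath (f i) (f j))) fun t => f (j + t)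

lemma pathShortcut_zero {i j : ℤ} {f : ℤ → A} (hi : 0 ≤ i) : pathShortcut i j f 0 = f 0 := by
  rw [pathShortcut, pathAppend_of_le (by omega), pathAppend_of_le hi]

lemma pathShortcut_add {i j t : ℤ} {f : ℤ → A} (ht : 0 ≤ t) :
    pathShortcut i j f (i + 1 + t) = f (j + t) :=
  pathAppend_add (by simp [pathAppend_stepPath]) ht

lemma IsDigPath.shortcut (hκ : Symmetric κ) {i d r : ℕ} {f : ℤ → A}
    (hf : IsDigPath X κ (i + d + r) f) (hfij : f i = f (i + d) ∨ κ (f i) (f (i + d))) :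
    IsDigPath X κ (i + 1 + r) (pathShortcut i (i + d) f) := by
  rw [pathShortcut]
  simpa using ((hf.mono (by omega)).append hκ (isDigPath_stepPath hκ
    (hf.mem (by positivity) (by push_cast; omega)) (hf.mem (by positivity) (by push_cast; omega))
    hfij) (stepPath_zero _ _).symm).append hκ
    (hf.shift (k := i + d) (m' := r) (by positivity) (by push_cast; omega))
    (by simp [pathAppend_stepPath])

lemma lift_pathShortcut {p : A → B} {i d r : ℕ} {f : ℤ → A} {a : ℤ → B}
    (hf : ∀ t ∈ Icc (0 : ℤ) (i + d + r : ℕ), p (f t) = a t) :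
    ∀ t ∈ Icc (0 : ℤ) (i + 1 + r : ℕ),
      p (pathShortcut i (i + d) f t) = pathShortcut i (i + d) a t :=
  lift_pathAppend
    (lift_pathAppend (fun t ⟨h0, ht⟩ => hf t ⟨h0, by push_cast; omega⟩)
      (fun t _ => by rw [apply_stepPath p, hf _ ⟨by positivity, by push_cast; omega⟩,
        hf _ ⟨by positivity, by push_cast; omega⟩]))
    (fun t ⟨h0, ht⟩ => hf _ ⟨by omega, by push_cast; omega⟩)

end Paths

section Reach

variable {A B : Type*} {X : Set A} {κ : A → A → Prop} {x y z : A} {m m' : ℕ}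

lemma reachIn_refl (hx : x ∈ X) : ReachIn X κ x x 0 :=
  ⟨fun _ => x, ⟨fun _ _ => hx, fun _ _ _ _ _ => Or.inl rfl⟩, rfl, rfl⟩

lemma reachIn_one (hκ : Symmetric κ) (hx : x ∈ X) (hy : y ∈ X) (hxy : x = y ∨ κ x y) :
    ReachIn X κ x y 1 :=
  ⟨stepPath x y, isDigPath_stepPath hκ hx hy hxy, stepPath_zero x y, stepPath_one x y⟩

lemma ReachIn.symm (h : ReachIn X κ x y m) : ReachIn X κ y x m := by
  obtain ⟨f, hf, rfl, rfl⟩ := h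
  exact ⟨_, hf.reverse, by simp, by simp⟩

lemma ReachIn.trans (hκ : Symmetric κ) (h₁ : ReachIn X κ x y m) (h₂ : ReachIn X κ y z m') :
    ReachIn X κ x z (m + m') := by
  obtain ⟨f, hf, rfl, rfl⟩ := h₁
  obtain ⟨g, hg, hg0, rfl⟩ := h₂
  refine ⟨_, hf.append hκ hg hg0.symm, pathAppend_of_le (by positivity), ?_⟩
  push_cast
  exact pathAppend_add hg0.symm (by positivity)

lemma ReachIn.mem_right (h : ReachIn X κ x y m) : y ∈ X := by
  obtain ⟨f, hf, -, rfl⟩ := h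
  exact hf.mem (by positivity) le_rfl

lemma ReachIn.eq_or_adj (h : ReachIn X κ x y m) (hm : m ≤ 1) : x = y ∨ κ x y := by
  obtain ⟨f, hf, rfl, rfl⟩ := h
  interval_cases m
  · exact Or.inl rfl
  · simpa using hf.step le_rfl one_pos

lemma ReachIn.map {Y : Set B} {lam : B → B → Prop} {p : A → B} (hmap : MapsTo p X Y)
    (hcont : DigContOn p X κ lam) (h : ReachIn X κ x y m) : ReachIn Y lam (p x) (p y) m := by
  obtain ⟨f, hf, rfl, rfl⟩ := h
  exact ⟨p ∘ f, hf.map hmap hcont, rfl, rfl⟩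

lemma self_mem_nbhd (X : Set A) (κ : A → A → Prop) (x : A) (ε : ℕ) : x ∈ Nbhd X κ x ε :=
  mem_union_right _ rfl

lemma mem_nbhd_iff {ε : ℕ} (hx : x ∈ X) :
    y ∈ Nbhd X κ x ε ↔ ∃ m ≤ ε, ReachIn X κ x y m := by
  constructor
  · rintro (⟨-, m, hm, h⟩ | rfl)
    · exact ⟨m, hm, h⟩
    · exact ⟨0, Nat.zero_le _, reachIn_refl hx⟩
  · rintro ⟨m, hm, h⟩
    exact mem_union_left _ ⟨h.mem_right, m, hm, h⟩

lemma nbhd_subset {ε : ℕ} (hx : x ∈ X) : Nbhd X κ x ε ⊆ X := fun _ hy =>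
  let ⟨_, _, h⟩ := (mem_nbhd_iff hx).1 hy
  h.mem_right

lemma mem_nbhd_one (hκ : Symmetric κ) (hx : x ∈ X) :
    y ∈ Nbhd X κ x 1 ↔ y ∈ X ∧ (x = y ∨ κ x y) := by
  rw [mem_nbhd_iff hx]
  constructor
  · rintro ⟨m, hm, h⟩
    exact ⟨h.mem_right, h.eq_or_adj hm⟩
  · rintro ⟨hy, hxy⟩
    exact ⟨1, le_rfl, reachIn_one hκ hx hy hxy⟩

lemma IsDigPath.mem_nbhd_of_closed {n : ℕ} {a : ℤ → A} (ha : IsDigPath X κ m a)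
    (hclosed : a 0 = a m) (hm : m ≤ 2 * n + 1) {i : ℤ} (h0 : 0 ≤ i) (hi : i ≤ m) :
    a i ∈ Nbhd X κ (a 0) n := by
  rw [mem_nbhd_iff (ha.mem le_rfl (by positivity))]
  rcases le_or_gt i n with hin | hin
  · lift i to ℕ using h0
    exact ⟨i, by exact_mod_cast hin, a, ha.mono (by exact_mod_cast hi), rfl, rfl⟩
  · obtain ⟨k, hk⟩ : ∃ k : ℕ, (k : ℤ) = m - i := ⟨(m - i).toNat, by omega⟩
    exact ⟨k, by omega, fun t => a (m - t), ha.reverse.mono (by omega), by simp [hclosed],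
      by simp [hk]⟩

end Reach

section Covering

variable {A B : Type*} {E : Set A} {Bs : Set B} {κ : A → A → Prop} {lam : B → B → Prop}
  {p : A → B}

lemma IsRadiusCovering.isLocalIso {n : ℕ} (h : IsRadiusCovering p E Bs κ lam n) :
    IsLocalIso p E Bs κ lam n := by
  intro x hx
  obtain ⟨hmap, -, -, hsheets⟩ := h
  obtain ⟨F, hF, hcover, -, hiso⟩ := hsheets (p x) (hmap hx)
  have hxF : x ∈ ⋃ e ∈ F, Nbhd E κ e n := hcover ▸ ⟨hx, self_mem_nbhd Bs lam (p x) n⟩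
  obtain ⟨e, he, hxe⟩ := mem_iUnion₂.1 hxF
  obtain rfl : x = e := (hiso e he).2.1 hxe (self_mem_nbhd E κ e n) (hF he).2.symm
  exact hiso x he

lemma IsRadiusCovering.exists_lift_step (hκ : Symmetric κ) (hlam : Symmetric lam)
    (hcov : IsRadiusCovering p E Bs κ lam 1) {x : A} (hx : x ∈ E) {b : B} (hb : b ∈ Bs)
    (hxb : p x = b ∨ lam (p x) b) : ∃ y ∈ E, (x = y ∨ κ x y) ∧ p y = b := by
  obtain ⟨y, hy, rfl⟩ :=
    (hcov.isLocalIso x hx).2.2.1 ((mem_nbhd_one hlam (hcov.1 hx)).2 ⟨hb, hxb⟩)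
  exact ⟨y, ((mem_nbhd_one hκ hx).1 hy).1, ((mem_nbhd_one hκ hx).1 hy).2, rfl⟩

lemma IsRadiusCovering.eq_of_adj (hκ : Symmetric κ) (hcov : IsRadiusCovering p E Bs κ lam 1)
    {x y z : A} (hx : x ∈ E) (hy : y ∈ E) (hz : z ∈ E) (hxy : x = y ∨ κ x y)
    (hxz : x = z ∨ κ x z) (hyz : p y = p z) : y = z :=
  (hcov.isLocalIso x hx).2.1 ((mem_nbhd_one hκ hx).2 ⟨hy, hxy⟩)
    ((mem_nbhd_one hκ hx).2 ⟨hz, hxz⟩) hyz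

lemma IsRadiusCovering.uniqLiftsProp (hκ : Symmetric κ)
    (hcov : IsRadiusCovering p E Bs κ lam 1) : UniqLiftsProp p E κ := by
  intro m f g hf hg hfg h0
  have key : ∀ k : ℕ, (k : ℤ) ≤ m → f k = g k := by
    intro k
    induction k with
    | zero => intro _; simpa using h0
    | succ k ih =>
      intro hk
      push_cast at hk ⊢
      have hfk := ih (by omega)
      refine hcov.eq_of_adj hκ (hf.mem (by positivity) (by omega)) (hf.mem (by omega) hk)
        (hg.mem (by omega) hk) (hf.step (by positivity) (by omega)) ?_ (hfg _ ⟨by omega, hk⟩)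
      rw [hfk]
      exact hg.step (by positivity) (by omega)
  rintro i ⟨h0i, him⟩
  lift i to ℕ using h0i
  exact key i him

lemma IsRadiusCovering.pathLiftingProp (hκ : Symmetric κ) (hlam : Symmetric lam)
    (hcov : IsRadiusCovering p E Bs κ lam 1) : PathLiftingProp p E Bs κ lam := by
  intro m
  induction m with
  | zero =>
    intro a _ e he hea
    refine ⟨fun _ => e, ⟨fun _ _ => he, fun _ _ _ _ _ => Or.inl rfl⟩, ?_, rfl⟩
    rintro i ⟨h0, hi⟩
    obtain rfl : i = 0 := by push_cast at hi; omega
    exact hea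
  | succ m ih =>
    intro a ha e he hea
    obtain ⟨g, hg, hga, rfl⟩ := ih a (ha.mono m.le_succ) e he hea
    have hgm : g m ∈ E := hg.mem (by positivity) le_rfl
    obtain ⟨y, hy, hgy, hpy⟩ := hcov.exists_lift_step hκ hlam hgm
      (ha.mem (i := m + 1) (by positivity) (by push_cast; rfl))
      (by rw [hga _ ⟨by positivity, le_rfl⟩]; exact ha.step (by positivity) (by push_cast; omega))
    refine ⟨pathAppend m g (stepPath (g m) y),
      hg.append hκ (isDigPath_stepPath hκ hgm hy hgy) (stepPath_zero _ _).symm, ?_,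
      pathAppend_of_le (by positivity)⟩
    rintro i ⟨h0, hi⟩
    rcases le_or_gt i m with h | h
    · rw [pathAppend_of_le h]; exact hga _ ⟨h0, h⟩
    · obtain rfl : i = m + 1 := by push_cast at hi; omega
      rw [pathAppend_of_lt h, add_sub_cancel_left, stepPath_one, hpy]

end Covering

lemma emod_eq_add_one_emod_iff {m i j : ℤ} (hi : 0 ≤ i) (him : i < m) (hj : 0 ≤ j)
    (hjm : j < m) : j % m = (i + 1) % m ↔ j = i + 1 ∨ (i = m - 1 ∧ j = 0) := by
  rw [Int.emod_eq_of_lt hj hjm]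
  rcases (show i + 1 ≤ m by omega).eq_or_lt with h | h
  · rw [h, Int.emod_self]; omega
  · rw [Int.emod_eq_of_lt (by omega) h]; omega

lemma emod_eq_sub_one_emod_iff {m i j : ℤ} (hi : 0 ≤ i) (him : i < m) (hj : 0 ≤ j)
    (hjm : j < m) : j % m = (i - 1) % m ↔ j = i - 1 ∨ (i = 0 ∧ j = m - 1) := by
  rw [Int.emod_eq_of_lt hj hjm]
  rcases hi.eq_or_lt with rfl | h
  · rw [show (0 : ℤ) - 1 = m - 1 - m by ring, Int.sub_emod_right, Int.emod_eq_of_lt (by omega)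
      (by omega)]
    omega
  · rw [Int.emod_eq_of_lt (by omega) (by omega)]; omega

section Loops

variable {A B : Type*} {E : Set A} {Bs : Set B} {κ : A → A → Prop} {lam : B → B → Prop}
  {p : A → B}

def LiftsClosed (p : A → B) (E : Set A) (κ : A → A → Prop) (m : ℕ) (a : ℤ → B) : Prop :=
  ∀ g : ℤ → A, IsDigPath E κ m g → (∀ i ∈ Icc (0 : ℤ) m, p (g i) = a i) → g 0 = g m

def LoopsLiftToLoops (p : A → B) (E : Set A) (Bs : Set B) (κ : A → A → Prop)
    (lam : B → B → Prop) (m : ℕ) : Prop :=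
  ∀ a : ℤ → B, IsDigPath Bs lam m a → a 0 = a m → LiftsClosed p E κ m a

lemma liftsClosed_of_stutter (hκ : Symmetric κ) (hlam : Symmetric lam)
    (hcov : IsRadiusCovering p E Bs κ lam 1) {i r : ℕ} {a : ℤ → B}
    (ha : IsDigPath Bs lam (i + 1 + r) a) (hclosed : a 0 = a (i + 1 + r))
    (hstut : a i = a (i + 1)) (hshort : LoopsLiftToLoops p E Bs κ lam (i + r)) :
    LiftsClosed p E κ (i + 1 + r) a := by
  intro g hg hlift
  have hgi : g i = g (i + 1) :=
    hcov.eq_of_adj hκ (hg.mem (by positivity) (by push_cast; omega))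
      (hg.mem (by positivity) (by push_cast; omega))
      (hg.mem (by positivity) (by push_cast; omega)) (Or.inl rfl)
      (hg.step (by positivity) (by push_cast; omega))
      (by rw [hlift _ ⟨by positivity, by push_cast; omega⟩,
        hlift _ ⟨by positivity, by push_cast; omega⟩, hstut])
  have hshort' := hshort (pathAppend i a fun t => a (i + 1 + t))
    ((ha.mono (by omega)).append hlam (ha.shift (by positivity) (by push_cast; omega))
      (by simpa using hstut))
    (by push_cast; rw [pathAppend_of_le (by positivity), pathAppend_add (by simpa using hstut)
      (by positivity), hclosed])
    (pathAppend i g fun t => g (i + 1 + t))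
    ((hg.mono (by omega)).append hκ (hg.shift (by positivity) (by push_cast; omega))
      (by simpa using hgi))
    (lift_pathAppend (fun t ⟨h0, ht⟩ => hlift t ⟨h0, by push_cast; omega⟩)
      (fun t ⟨h0, ht⟩ => hlift _ ⟨by omega, by push_cast; omega⟩))
  push_cast at hshort'
  rwa [pathAppend_of_le (by positivity), pathAppend_add (by simpa using hgi) (by positivity)]
    at hshort'

lemma eq_or_adj_of_lift_chord (hκ : Symmetric κ) (hlam : Symmetric lam)
    (hcov : IsRadiusCovering p E Bs κ lam 1) {d : ℕ} (hloop : LoopsLiftToLoops p E Bs κ lam (d + 1))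
    {a : ℤ → B} {g : ℤ → A} (ha : IsDigPath Bs lam d a) (hchord : a d = a 0 ∨ lam (a d) (a 0))
    (hg : IsDigPath E κ d g) (hlift : ∀ t ∈ Icc (0 : ℤ) d, p (g t) = a t) :
    g d = g 0 ∨ κ (g d) (g 0) := by
  obtain ⟨y, hy, hgdy, hpy⟩ := hcov.exists_lift_step hκ hlam (hg.mem (by positivity) le_rfl)
    (ha.mem le_rfl (by positivity)) (hlift _ ⟨by positivity, le_rfl⟩ ▸ hchord)
  -- `a` closed up by the chord is a loop, so the lift of the chord from `g d` ends at `g 0`.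
  have h := hloop (pathAppend d a (stepPath (a d) (a 0)))
    (ha.append hlam (isDigPath_stepPath hlam (ha.mem (by positivity) le_rfl)
      (ha.mem le_rfl (by positivity)) hchord) (stepPath_zero _ _).symm)
    (by push_cast; rw [pathAppend_of_le (by positivity), pathAppend_stepPath])
    (pathAppend d g (stepPath (g d) y))
    (hg.append hκ (isDigPath_stepPath hκ (hg.mem (by positivity) le_rfl) hy hgdy)
      (stepPath_zero _ _).symm)
    (lift_pathAppend hlift fun t _ => by
      rw [apply_stepPath p, hpy, hlift _ ⟨by positivity, le_rfl⟩])
  push_cast at h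
  rw [pathAppend_of_le (by positivity), pathAppend_stepPath] at h
  rwa [h]

lemma liftsClosed_of_chord (hκ : Symmetric κ) (hlam : Symmetric lam)
    (hcov : IsRadiusCovering p E Bs κ lam 1) {i d r : ℕ} {a : ℤ → B}
    (ha : IsDigPath Bs lam (i + d + r) a) (hclosed : a 0 = a (i + d + r))
    (hchord : a i = a (i + d) ∨ lam (a i) (a (i + d)))
    (hloop₁ : LoopsLiftToLoops p E Bs κ lam (d + 1))
    (hloop₂ : LoopsLiftToLoops p E Bs κ lam (i + 1 + r)) :
    LiftsClosed p E κ (i + d + r) a := by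
  intro g hg hlift
  have hai : a i ∈ Bs := ha.mem (by positivity) (by push_cast; omega)
  have haj : a (i + d) ∈ Bs := ha.mem (by positivity) (by push_cast; omega)
  have hgi : g i ∈ E := hg.mem (by positivity) (by push_cast; omega)
  have hgj : g (i + d) ∈ E := hg.mem (by positivity) (by push_cast; omega)
  have hgij : g (i + d) = g i ∨ κ (g (i + d)) (g i) := by
    simpa using eq_or_adj_of_lift_chord hκ hlam hcov hloop₁
      (ha.shift (k := i) (m' := d) (by positivity) (by push_cast; omega))
      (by simpa using hchord.imp Eq.symm (@hlam _ _))
      (hg.shift (k := i) (m' := d) (by positivity) (by push_cast; omega))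
      (fun t ⟨h0, ht⟩ => hlift _ ⟨by omega, by push_cast; omega⟩)
  have h := hloop₂ (pathShortcut i (i + d) a) (ha.shortcut hlam hchord)
    (by push_cast; rw [pathShortcut_zero (by positivity), pathShortcut_add (by positivity),
      hclosed])
    (pathShortcut i (i + d) g) (hg.shortcut hκ (hgij.imp Eq.symm (@hκ _ _)))
    (lift_pathShortcut hlift)
  push_cast at h
  rwa [pathShortcut_zero (by positivity), pathShortcut_add (by positivity)] at h

lemma isSimpleLoop_of_forall_not_chord (hlam : IsAdjacency lam) {m : ℕ} {a : ℤ → B}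
    (ha : IsDigPath Bs lam m a) (hclosed : a 0 = a m)
    (hstut : ∀ i : ℤ, 0 ≤ i → i < m → a i ≠ a (i + 1))
    (hchord : ∀ i j : ℤ, 0 ≤ i → i + 2 ≤ j → j ≤ m → j + 2 ≤ i + m →
      ¬(a i = a j ∨ lam (a i) (a j))) :
    IsSimpleLoop Bs lam m a := by
  rcases m.eq_zero_or_pos with rfl | hm
  · exact ⟨ha, hclosed, fun i hi => by simp at hi, fun i hi => by simp at hi⟩
  have hnear (i j : ℤ) (hi : 0 ≤ i) (hij : i < j) (hjm : j < m)
      (h : a i = a j ∨ lam (a i) (a j)) : j = i + 1 ∨ (i = 0 ∧ j = m - 1) := by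
    by_contra hfar
    exact hchord i j hi (by omega) hjm.le (by omega) h
  have hnext (i : ℤ) (hi : 0 ≤ i) (him : i < m) : lam (a i) (a (i + 1)) :=
    (ha.step hi him).resolve_left (hstut i hi him)
  have hwrap : lam (a (m - 1)) (a 0) := by
    simpa [hclosed] using hnext (m - 1) (by omega) (by omega)
  have hinj (i j : ℤ) (hi : 0 ≤ i) (hij : i < j) (hjm : j < m) : a i ≠ a j := by
    intro h
    rcases hnear i j hi hij hjm (Or.inl h) with rfl | ⟨rfl, rfl⟩
    · exact hstut i hi (by omega) h
    · exact hlam.2 _ (h ▸ hwrap)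
  refine ⟨ha, hclosed, fun i ⟨hi, him⟩ j ⟨hj, hjm⟩ h => ?_, fun i ⟨hi, him⟩ j ⟨hj, hjm⟩ => ?_⟩
  · rcases lt_trichotomy i j with hij | rfl | hij
    · exact absurd h (hinj i j hi hij hjm)
    · rfl
    · exact absurd h.symm (hinj j i hj hij him)
  rw [emod_eq_add_one_emod_iff hi him hj hjm, emod_eq_sub_one_emod_iff hi him hj hjm]
  constructor
  · intro h
    rcases lt_trichotomy i j with hij | rfl | hij
    · have := hnear i j hi hij hjm (Or.inr h); omega
    · exact absurd h (hlam.2 _)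
    · have := hnear j i hj hij him (Or.inr (hlam.1 h)); omega
  · rintro ((rfl | ⟨rfl, rfl⟩) | (rfl | ⟨rfl, rfl⟩))
    · exact hnext i hi (by omega)
    · exact hwrap
    · simpa using hlam.1 (hnext (i - 1) (by omega) (by omega))
    · exact hlam.1 hwrap

lemma loopsLiftToLoops_of_simple (hκ : IsAdjacency κ) (hlam : IsAdjacency lam)
    (hcov : IsRadiusCovering p E Bs κ lam 1) {L : ℕ}
    (H : ∀ m ≤ L, ∀ a : ℤ → B, IsSimpleLoop Bs lam m a → LiftsClosed p E κ m a) :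
    ∀ m ≤ L, LoopsLiftToLoops p E Bs κ lam m := by
  intro m
  induction m using Nat.strong_induction_on with
  | _ m ih =>
  intro hmL a ha hclosed
  by_cases hs : ∃ i : ℤ, 0 ≤ i ∧ i < m ∧ a i = a (i + 1)
  · obtain ⟨i, hi, him, h⟩ := hs
    lift i to ℕ using hi
    obtain ⟨r, rfl⟩ : ∃ r, m = i + 1 + r := ⟨m - (i + 1), by omega⟩
    exact liftsClosed_of_stutter hκ.1 hlam.1 hcov ha (by simpa using hclosed) h
      (ih _ (by omega) (by omega))
  by_cases hc : ∃ i j : ℤ, 0 ≤ i ∧ i + 2 ≤ j ∧ j ≤ m ∧ j + 2 ≤ i + m ∧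
      (a i = a j ∨ lam (a i) (a j))
  · obtain ⟨i, j, hi, hij, hjm, hjm', h⟩ := hc
    lift i to ℕ using hi
    obtain ⟨d, rfl⟩ : ∃ d : ℕ, j = i + d := ⟨(j - i).toNat, by omega⟩
    obtain ⟨r, rfl⟩ : ∃ r, m = i + d + r := ⟨m - i - d, by omega⟩
    exact liftsClosed_of_chord hκ.1 hlam.1 hcov ha (by simpa using hclosed) h
      (ih _ (by omega) (by omega)) (ih _ (by omega) (by omega))
  exact H m hmL a (isSimpleLoop_of_forall_not_chord hlam ha hclosed
    (fun i hi him h => hs ⟨i, hi, him, h⟩)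
    (fun i j hi hij hjm hjm' h => hc ⟨i, j, hi, hij, hjm, hjm', h⟩))

lemma eq_of_reachIn_of_loopsLiftToLoops (hκ : Symmetric κ) (hlam : Symmetric lam)
    (hcov : IsRadiusCovering p E Bs κ lam 1) {L : ℕ}
    (hL : ∀ m ≤ L, LoopsLiftToLoops p E Bs κ lam m) {e x y : A} {s t : ℕ}
    (hx : ReachIn E κ e x s) (hy : ReachIn E κ e y t) (hst : s + t ≤ L) (hxy : p x = p y) :
    x = y := by
  obtain ⟨γ, hγ, rfl, rfl⟩ := hx
  obtain ⟨δ, hδ, hδ0, rfl⟩ := hy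
  have hβ : IsDigPath Bs lam t fun i => p (δ (t - i)) := (hδ.map hcov.1 hcov.2.2.1).reverse
  obtain ⟨ε, hε, hεβ, hε0⟩ := hcov.pathLiftingProp hκ hlam t _ hβ (γ s)
    (hγ.mem (by positivity) le_rfl) (by simpa using hxy)
  -- `γ` followed by `ε` lifts a loop, so `ε` ends where `γ` starts.
  have hεt : γ 0 = ε t := by
    have h := hL (s + t) hst (pathAppend s (p ∘ γ) fun i => p (δ (t - i)))
      ((hγ.map hcov.1 hcov.2.2.1).append hlam hβ (by simpa using hxy))
      (by push_cast; rw [pathAppend_of_le (by positivity), pathAppend_add (by simpa using hxy)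
        (by positivity), Function.comp_apply, sub_self, hδ0])
      (pathAppend s γ ε) (hγ.append hκ hε hε0.symm) (lift_pathAppend (fun _ _ => rfl) hεβ)
    push_cast at h
    rwa [pathAppend_of_le (by positivity), pathAppend_add hε0.symm (by positivity)] at h
  -- Hence `ε` run backwards is a second lift of `p ∘ δ` from `δ 0`.
  have h := hcov.uniqLiftsProp hκ t δ (fun i => ε (t - i)) hδ hε.reverse
    (fun i ⟨h0, hi⟩ => by rw [hεβ _ ⟨by omega, by omega⟩, sub_sub_cancel])
    (by rw [sub_zero, ← hεt, hδ0]) ⟨by positivity, le_rfl⟩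
  simpa [hε0] using h.symm

end Loops

section RadiusCovering

variable {A B : Type*} {E : Set A} {Bs : Set B} {κ : A → A → Prop} {lam : B → B → Prop}
  {p : A → B}

lemma IsDigIsoOn.lift_mem {S : Set A} {T : Set B} (hiso : IsDigIsoOn p S T κ lam)
    (hSE : S ⊆ E) (huniq : UniqLiftsProp p E κ) {m : ℕ} {a : ℤ → B} {g : ℤ → A}
    (ha : IsDigPath Bs lam m a) (haT : ∀ i ∈ Icc (0 : ℤ) m, a i ∈ T) (hg : IsDigPath E κ m g)
    (hlift : ∀ i ∈ Icc (0 : ℤ) m, p (g i) = a i) (hg0 : g 0 ∈ S) :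
    ∀ i ∈ Icc (0 : ℤ) m, g i ∈ S := by
  have : Nonempty A := ⟨g 0⟩
  have hinv (i : ℤ) (hi : i ∈ Icc (0 : ℤ) m) :=
    Function.invFunOn_pos (f := p) (s := S) (hiso.2.2.1 (haT i hi))
  have hpath : IsDigPath E κ m fun i => Function.invFunOn p S (a i) :=
    ⟨fun i hi => hSE (hinv i hi).1, fun i hi j hj hij => (ha.2 i hi j hj hij).elim
      (fun h => Or.inl (congrArg _ h)) fun h => hiso.2.2.2.2 _ (hinv i hi).1 _ (hinv j hj).1
        (by rwa [(hinv i hi).2, (hinv j hj).2])⟩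
  have h0 : (0 : ℤ) ∈ Icc (0 : ℤ) m := ⟨le_rfl, by positivity⟩
  intro i hi
  rw [huniq m g _ hg hpath (fun j hj => by rw [hlift j hj, (hinv j hj).2])
    (hiso.2.1 hg0 (hinv 0 h0).1 (by rw [hlift 0 h0, (hinv 0 h0).2])) hi]
  exact (hinv i hi).1

lemma IsDigIsoOn.isSimpleLoop_of_lift {S : Set A} {T : Set B} (hκ : Irreflexive κ)
    (hlam : Irreflexive lam) (hiso : IsDigIsoOn p S T κ lam) {m : ℕ} {a : ℤ → B} {g : ℤ → A}
    (ha : IsSimpleLoop Bs lam m a) (hg : IsDigPath E κ m g)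
    (hlift : ∀ i ∈ Icc (0 : ℤ) m, p (g i) = a i) (hgS : ∀ i ∈ Icc (0 : ℤ) m, g i ∈ S) :
    IsSimpleLoop E κ m g := by
  obtain ⟨-, hclosed, hinj, hadj⟩ := ha
  have h0 : (0 : ℤ) ∈ Icc (0 : ℤ) m := ⟨le_rfl, by positivity⟩
  have hm : (m : ℤ) ∈ Icc (0 : ℤ) m := ⟨by positivity, le_rfl⟩
  have hinj' : ∀ i ∈ Ico (0 : ℤ) m, ∀ j ∈ Ico (0 : ℤ) m, g i = g j → i = j :=
    fun i hi j hj h => hinj i hi j hj (by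
      rw [← hlift i (Ico_subset_Icc_self hi), ← hlift j (Ico_subset_Icc_self hj), h])
  refine ⟨hg, hiso.2.1 (hgS 0 h0) (hgS m hm) (by rw [hlift 0 h0, hlift m hm, hclosed]), hinj',
    fun i hi j hj => ?_⟩
  have hi' := Ico_subset_Icc_self hi
  have hj' := Ico_subset_Icc_self hj
  rw [← hadj i hi j hj, ← hlift i hi', ← hlift j hj']
  constructor
  · intro h
    refine (hiso.2.2.2.1 _ (hgS i hi') _ (hgS j hj') h).resolve_left fun hp => ?_
    obtain rfl := hinj i hi j hj (by rw [← hlift i hi', ← hlift j hj', hp])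
    exact hκ _ h
  · intro h
    refine (hiso.2.2.2.2 _ (hgS i hi') _ (hgS j hj') h).resolve_left fun he => ?_
    exact hlam _ (he ▸ h)

lemma IsRadiusCovering.isSimpleLoop_of_lift {n : ℕ} (hn : IsRadiusCovering p E Bs κ lam n)
    (hκ : IsAdjacency κ) (hlam : IsAdjacency lam) (hcov : IsRadiusCovering p E Bs κ lam 1)
    {m : ℕ} (hm : m ≤ 2 * n + 1) {a : ℤ → B} {g : ℤ → A} (ha : IsSimpleLoop Bs lam m a)
    (hg : IsDigPath E κ m g) (hlift : ∀ i ∈ Icc (0 : ℤ) m, p (g i) = a i) :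
    IsSimpleLoop E κ m g := by
  have hg0 : g 0 ∈ E := hg.mem le_rfl (by positivity)
  have hiso := hn.isLocalIso _ hg0
  rw [hlift 0 ⟨le_rfl, by positivity⟩] at hiso
  exact hiso.isSimpleLoop_of_lift hκ.2 hlam.2 ha hg hlift
    (hiso.lift_mem (nbhd_subset hg0) (hcov.uniqLiftsProp hκ.1) ha.1
      (fun i hi => ha.1.mem_nbhd_of_closed ha.2.1 hm hi.1 hi.2) hg hlift
      (self_mem_nbhd E κ (g 0) n))

lemma inter_preimage_nbhd_eq_biUnion (hκ : Symmetric κ) (hlam : Symmetric lam)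
    (hcov : IsRadiusCovering p E Bs κ lam 1) {b : B} (hb : b ∈ Bs) (n : ℕ) :
    E ∩ p ⁻¹' Nbhd Bs lam b n = ⋃ e ∈ {e ∈ E | p e = b}, Nbhd E κ e n := by
  ext x
  simp only [mem_inter_iff, mem_preimage, mem_iUnion, mem_setOf_eq, exists_prop]
  constructor
  · rintro ⟨hx, hxb⟩
    obtain ⟨m, hm, hr⟩ := (mem_nbhd_iff hb).1 hxb
    obtain ⟨α, hα, hα0, hαm⟩ := hr.symm
    obtain ⟨g, hg, hgα, rfl⟩ := hcov.pathLiftingProp hκ hlam m α hα x hx hα0.symm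
    have hgm : g m ∈ E := hg.mem (by positivity) le_rfl
    exact ⟨g m, ⟨hgm, by rw [hgα _ ⟨by positivity, le_rfl⟩, hαm]⟩,
      (mem_nbhd_iff hgm).2 ⟨m, hm, ReachIn.symm ⟨g, hg, rfl, rfl⟩⟩⟩
  · rintro ⟨e, ⟨he, rfl⟩, hxe⟩
    obtain ⟨m, hm, hr⟩ := (mem_nbhd_iff he).1 hxe
    exact ⟨hr.mem_right, (mem_nbhd_iff (hcov.1 he)).2 ⟨m, hm, hr.map hcov.1 hcov.2.2.1⟩⟩

lemma isDigIsoOn_nbhd_of_loopsLiftToLoops (hκ : Symmetric κ) (hlam : Symmetric lam)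
    (hcov : IsRadiusCovering p E Bs κ lam 1) {n : ℕ}
    (hL : ∀ m ≤ 2 * n + 1, LoopsLiftToLoops p E Bs κ lam m) {e : A} (he : e ∈ E) :
    IsDigIsoOn p (Nbhd E κ e n) (Nbhd Bs lam (p e) n) κ lam := by
  refine ⟨fun x hx => ?_, fun x hx y hy hxy => ?_, fun b hb => ?_,
    fun x hx y hy => hcov.2.2.1 x (nbhd_subset he hx) y (nbhd_subset he hy),
    fun x hx y hy hxy => ?_⟩
  · obtain ⟨s, hs, h⟩ := (mem_nbhd_iff he).1 hx
    exact (mem_nbhd_iff (hcov.1 he)).2 ⟨s, hs, h.map hcov.1 hcov.2.2.1⟩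
  · obtain ⟨s, hs, hx⟩ := (mem_nbhd_iff he).1 hx
    obtain ⟨t, ht, hy⟩ := (mem_nbhd_iff he).1 hy
    exact eq_of_reachIn_of_loopsLiftToLoops hκ hlam hcov hL hx hy (by omega) hxy
  · obtain ⟨m, hm, α, hα, hα0, rfl⟩ := (mem_nbhd_iff (hcov.1 he)).1 hb
    obtain ⟨g, hg, hgα, rfl⟩ := hcov.pathLiftingProp hκ hlam m α hα e he hα0.symm
    exact ⟨g m, (mem_nbhd_iff he).2 ⟨m, hm, g, hg, rfl, rfl⟩, hgα _ ⟨by positivity, le_rfl⟩⟩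
  · have hxE := nbhd_subset he hx
    obtain ⟨s, hs, hx⟩ := (mem_nbhd_iff he).1 hx
    obtain ⟨t, ht, hy⟩ := (mem_nbhd_iff he).1 hy
    -- The lift at `x` of the step from `p x` to `p y` must end at `y`.
    obtain ⟨z, hz, hxz, hpz⟩ :=
      hcov.exists_lift_step hκ hlam hxE (hcov.1 hy.mem_right) (Or.inr hxy)
    obtain rfl : z = y := eq_of_reachIn_of_loopsLiftToLoops hκ hlam hcov hL
      (hx.trans hκ (reachIn_one hκ hxE hz hxz)) hy (by omega) hpz
    exact hxz

lemma isRadiusCovering_of_loopsLiftToLoops (hκ : Symmetric κ) (hlam : Symmetric lam)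
    (hcov : IsRadiusCovering p E Bs κ lam 1) {n : ℕ}
    (hL : ∀ m ≤ 2 * n + 1, LoopsLiftToLoops p E Bs κ lam m) :
    IsRadiusCovering p E Bs κ lam n := by
  refine ⟨hcov.1, hcov.2.1, hcov.2.2.1, fun b hb => ⟨{e ∈ E | p e = b}, subset_rfl,
    inter_preimage_nbhd_eq_biUnion hκ hlam hcov hb n, ?_, ?_⟩⟩
  · rintro e ⟨he, rfl⟩ e' ⟨he', hee'⟩ hne
    refine disjoint_left.2 fun x hx hx' => hne ?_
    obtain ⟨s, hs, hxs⟩ := (mem_nbhd_iff he).1 hx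
    obtain ⟨t, ht, hxt⟩ := (mem_nbhd_iff he').1 hx'
    exact eq_of_reachIn_of_loopsLiftToLoops hκ hlam hcov hL hxs.symm hxt.symm (by omega)
      hee'.symm
  · rintro e ⟨he, rfl⟩
    exact isDigIsoOn_nbhd_of_loopsLiftToLoops hκ hlam hcov hL he

end RadiusCovering

theorem thm_4_5_general {N M : ℕ} (E : Set (Fin N → ℤ)) (Bs : Set (Fin M → ℤ))
    (κ : (Fin N → ℤ) → (Fin N → ℤ) → Prop) (lam : (Fin M → ℤ) → (Fin M → ℤ) → Prop)
    (hκ : IsAdjacency κ) (hlam : IsAdjacency lam)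
    (p : (Fin N → ℤ) → (Fin M → ℤ))
    (hcov : IsRadiusCovering p E Bs κ lam 1)
    (n : ℕ) :
    IsRadiusCovering p E Bs κ lam n ↔
      ∀ m : ℕ, m ≤ 2 * n + 1 → ∀ a : ℤ → (Fin M → ℤ), IsSimpleLoop Bs lam m a →
        ∀ g : ℤ → (Fin N → ℤ), IsDigPath E κ m g →
          (∀ i ∈ Set.Icc (0 : ℤ) (m : ℤ), p (g i) = a i) →
          IsSimpleLoop E κ m g := by
  refine ⟨fun hn m hm a ha g hg hlift => hn.isSimpleLoop_of_lift hκ hlam hcov hm ha hg hlift,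
    fun H => isRadiusCovering_of_loopsLiftToLoops hκ.1 hlam.1 hcov ?_⟩
  exact loopsLiftToLoops_of_simple hκ hlam hcov fun m hm a ha g hg hlift =>
    (H m hm a ha g hg hlift).2.1

/-- Theorem 4.5: a `(κ,λ)`-covering map `p` between connected digital images is a radius `n`
covering map if and only if every lifting of every simple `λ`-loop in `Bs` of length at most
`2n+1` is a simple `κ`-loop in `E`. -/
theorem thm_4_5 {N M : ℕ} (E : Set (Fin N → ℤ)) (Bs : Set (Fin M → ℤ))
    (κ : (Fin N → ℤ) → (Fin N → ℤ) → Prop) (lam : (Fin M → ℤ) → (Fin M → ℤ) → Prop)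
    (hκ : IsAdjacency κ) (hlam : IsAdjacency lam)
    (hconnE : DigConnected E κ) (hconnB : DigConnected Bs lam)
    (p : (Fin N → ℤ) → (Fin M → ℤ))
    (hcov : IsRadiusCovering p E Bs κ lam 1)
    (n : ℕ) (hn : 1 ≤ n) :
    IsRadiusCovering p E Bs κ lam n ↔
      ∀ m : ℕ, m ≤ 2 * n + 1 → ∀ a : ℤ → (Fin M → ℤ), IsSimpleLoop Bs lam m a →
        ∀ g : ℤ → (Fin N → ℤ), IsDigPath E κ m g →
          (∀ i ∈ Set.Icc (0 : ℤ) (m : ℤ), p (g i) = a i) →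
          IsSimpleLoop E κ m g :=
  thm_4_5_general E Bs κ lam hκ hlam p hcov n
end
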